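/- arXiv:1201.6061 — 2 statements merged into one kernel-verified Lean document; each statement's English description precedes it below -/
import Mathlib

section
/- For n ≥ 3, the n×n circulant matrix Q = circ(Q₁, Q₂, ..., Qₙ) built from Pell-Lucas numbers is invertible (has nonzero determinant over the rationals). -/
/-
Let `S` be the cyclic shift matrix. A circulant matrix `circ (c₀, …, cₙ₋₁)` is `g(S)` for
`g = ∑ cₖ Xᵏ`, and `Sⁿ = 1`; so if `g` is coprime to `Xⁿ - 1`, a Bézout identity `a g + b (Xⁿ - 1) = 1`
evaluated at `S` inverts it. For the Pell-Lucas polynomial `g = ∑_{k<n} Q_{k+1} Xᵏ` the recurrence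
telescopes to `(1 - 2X - X²) g = 2 + 2X - Q_{n+1} Xⁿ - Q_n X^{n+1}`. At an `n`-th root of unity `z`
a zero of `g` would give `(Q_n - 2) z = 2 - Q_{n+1}`, and taking absolute values `Q_n = Q_{n+1}`,
which fails since the Pell-Lucas numbers increase strictly from `Q₁` on.
-/

def pell : ℕ → ℚ
  | 0 => 0
  | 1 => 1
  | n + 2 => 2 * pell (n + 1) + pell n

def pellLucas : ℕ → ℚ
  | 0 => 2
  | 1 => 2
  | n + 2 => 2 * pellLucas (n + 1) + pellLucas n

/-- Circulant matrix `circ (c₁, …, cₙ)` with `(i,j)` entry `c ((j - i mod n) + 1)`. -/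
def circMat (n : ℕ) (c : ℕ → ℚ) : Matrix (Fin n) (Fin n) ℚ :=
  fun i j => c ((j - i : Fin n).val + 1)

open Polynomial Matrix Finset Fin.NatCast

section Circulant

theorem circulant_eq_sum_smul_circulant_single {ι R : Type*} [Fintype ι] [DecidableEq ι]
    [Sub ι] [Semiring R] (v : ι → R) :
    circulant v = ∑ k, v k • circulant (Pi.single k 1) := by
  ext i j
  simp [Matrix.sum_apply, circulant_apply, Pi.single_apply]

theorem circulant_single_mul_circulant_single {ι R : Type*} [Fintype ι] [DecidableEq ι]
    [AddGroup ι] [Semiring R] (a b : ι) :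
    circulant (Pi.single a 1 : ι → R) * circulant (Pi.single b 1) =
      circulant (Pi.single (a + b) 1) := by
  rw [circulant_mul]
  congr 1
  ext i
  simp [mulVec, dotProduct, circulant_apply, Pi.single_apply, sub_eq_iff_eq_add]

variable {R : Type*} [CommRing R] {n : ℕ}

noncomputable def circulantPoly (v : Fin n → R) : R[X] := ∑ k, C (v k) * X ^ (k : ℕ)

variable [NeZero n]

theorem circulant_single_one_pow (k : ℕ) :
    circulant (Pi.single 1 1 : Fin n → R) ^ k = circulant (Pi.single (k : Fin n) 1) := by
  induction k with
  | zero => simp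
  | succ k ih =>
    rw [pow_succ', ih, circulant_single_mul_circulant_single, Nat.cast_succ, add_comm]

theorem aeval_circulantPoly (v : Fin n → R) :
    aeval (circulant (Pi.single 1 1)) (circulantPoly v) = circulant v := by
  simp [circulantPoly, circulant_single_one_pow, Algebra.smul_def,
    circulant_eq_sum_smul_circulant_single v]

theorem aeval_X_pow_sub_one_circulant_single_one :
    aeval (circulant (Pi.single 1 1 : Fin n → R)) (X ^ n - 1 : R[X]) = 0 := by
  simp [circulant_single_one_pow]

theorem isUnit_det_circulant_of_isCoprime {v : Fin n → R}
    (h : IsCoprime (circulantPoly v) (X ^ n - 1)) : IsUnit (circulant v).det := by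
  obtain ⟨a, b, hab⟩ := h
  apply isUnit_det_of_left_inverse (B := aeval (circulant (Pi.single 1 1)) a)
  simpa only [map_add, map_mul, map_one, aeval_circulantPoly,
    aeval_X_pow_sub_one_circulant_single_one, mul_zero, add_zero] using
    congrArg (aeval (circulant (Pi.single 1 1 : Fin n → R))) hab

end Circulant

theorem pellLucas_add_two (n : ℕ) : pellLucas (n + 2) = 2 * pellLucas (n + 1) + pellLucas n := rfl

theorem two_le_pellLucas : ∀ n, 2 ≤ pellLucas n
  | 0 | 1 => le_rfl
  | n + 2 => by
    have := two_le_pellLucas n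
    have := two_le_pellLucas (n + 1)
    rw [pellLucas_add_two]
    linarith

theorem pellLucas_lt_pellLucas_succ {n : ℕ} (hn : n ≠ 0) : pellLucas n < pellLucas (n + 1) := by
  obtain ⟨m, rfl⟩ := Nat.exists_eq_succ_of_ne_zero hn
  have := two_le_pellLucas m
  have := two_le_pellLucas (m + 1)
  rw [pellLucas_add_two]
  linarith

theorem one_sub_two_X_sub_X_sq_mul_sum_pellLucas (n : ℕ) :
    (1 - 2 * X - X ^ 2) * ∑ k ∈ range n, C (pellLucas (k + 1)) * X ^ k =
      C 2 + C 2 * X - C (pellLucas (n + 1)) * X ^ n - C (pellLucas n) * X ^ (n + 1) := by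
  induction n with
  | zero => simp [pellLucas]
  | succ n ih =>
    rw [sum_range_succ, mul_add, ih, pellLucas_add_two]
    simp only [map_add, map_mul, map_ofNat]
    ring

theorem aeval_sum_pellLucas_ne_zero_of_pow_eq_one {n : ℕ} (hn : n ≠ 0) {z : ℂ} (hz : z ^ n = 1) :
    aeval z (∑ k ∈ range n, C (pellLucas (k + 1)) * X ^ k) ≠ 0 := by
  intro h
  have hid := congrArg (aeval z) (one_sub_two_X_sub_X_sq_mul_sum_pellLucas n)
  rw [map_mul, h, mul_zero] at hid
  simp only [map_sub, map_add, map_mul, aeval_C, aeval_X, map_pow, pow_succ, hz, one_mul,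
    eq_ratCast] at hid
  have hlin : ((pellLucas n - 2 : ℚ) : ℂ) * z = -((pellLucas (n + 1) - 2 : ℚ) : ℂ) := by
    push_cast
    linear_combination hid
  have hnorm := congrArg norm hlin
  rw [norm_mul, Complex.norm_eq_one_of_pow_eq_one hz hn, mul_one, norm_neg, Complex.norm_ratCast,
    Complex.norm_ratCast, abs_of_nonneg (by simpa using mod_cast two_le_pellLucas n),
    abs_of_nonneg (by simpa using mod_cast two_le_pellLucas (n + 1))] at hnorm
  have : pellLucas n - 2 = pellLucas (n + 1) - 2 := by exact_mod_cast hnorm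
  linarith [pellLucas_lt_pellLucas_succ hn]

theorem isCoprime_circulantPoly_pellLucas {n : ℕ} (hn : n ≠ 0) :
    IsCoprime (circulantPoly fun k : Fin n ↦ pellLucas (k + 1)) (X ^ n - 1) := by
  rw [circulantPoly, Fin.sum_univ_eq_sum_range (fun k ↦ C (pellLucas (k + 1)) * X ^ k),
    isCoprime_iff_aeval_ne_zero_of_isAlgClosed ℚ ℂ]
  intro z
  by_cases hz : z ^ n = 1
  · exact .inl (aeval_sum_pellLucas_ne_zero_of_pow_eq_one hn hz)
  · exact .inr (by simpa [sub_eq_zero] using hz)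

theorem circMat_eq_transpose_circulant (n : ℕ) (c : ℕ → ℚ) :
    circMat n c = (circulant fun k : Fin n ↦ c (k + 1))ᵀ := rfl

theorem circ_pellLucas_invertible_general (n : ℕ) : (circMat n pellLucas).det ≠ 0 := by
  rcases Nat.eq_zero_or_pos n with rfl | hn
  · simp
  have : NeZero n := ⟨hn.ne'⟩
  rw [circMat_eq_transpose_circulant, det_transpose]
  exact (isUnit_det_circulant_of_isCoprime (isCoprime_circulantPoly_pellLucas hn.ne')).ne_zero

theorem circ_pellLucas_invertible (n : ℕ) (hn : 3 ≤ n) : (circMat n pellLucas).det ≠ 0 :=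
  circ_pellLucas_invertible_general n
end

section
/- For n ≥ 3 and no n-th root of unity ω^k (1 ≤ k ≤ n-1) satisfies 1 - Pₙ₊₁ - Pₙ ω^k = 0; equivalently, (1 - Pₙ₊₁)/Pₙ is not an n-th root of unity distinct from 1. -/
/-!
Since `‖ω‖ = 1`, a vanishing of `1 - Pₙ₊₁ - Pₙ ωᵏ` would force `Pₙ = |1 - Pₙ₊₁| = Pₙ₊₁ - 1`.
But for `n ≥ 2` the recurrence gives `Pₙ₊₁ = 2Pₙ + Pₙ₋₁ ≥ Pₙ + 2`.
-/

lemma pell_nonneg (n : ℕ) : 0 ≤ pell n := by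
  induction n using Nat.twoStepInduction with
  | zero => norm_num [pell]
  | one => norm_num [pell]
  | more n ih₁ ih₂ => rw [pell]; linarith

lemma one_le_pell_succ (n : ℕ) : 1 ≤ pell (n + 1) := by
  induction n using Nat.twoStepInduction with
  | zero => norm_num [pell]
  | one => norm_num [pell]
  | more n ih₁ ih₂ => rw [pell]; linarith [pell_nonneg (n + 1)]

lemma pell_add_one_lt_pell_succ {n : ℕ} (hn : 2 ≤ n) : pell n + 1 < pell (n + 1) := by
  obtain ⟨m, rfl⟩ := Nat.exists_eq_add_of_le' hn
  have hrec : pell (m + 2 + 1) = 2 * pell (m + 2) + pell (m + 1) := by rw [pell]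
  linarith [one_le_pell_succ m, one_le_pell_succ (m + 1)]

lemma abs_pell_ne_abs_one_sub_pell_succ {n : ℕ} (hn : 2 ≤ n) :
    |pell n| ≠ |1 - pell (n + 1)| := by
  rw [abs_of_nonneg (pell_nonneg n), abs_of_nonpos (by linarith [one_le_pell_succ n])]
  linarith [pell_add_one_lt_pell_succ hn]

lemma sub_mul_ne_zero_of_norm_ne {𝕜 : Type*} [NormedDivisionRing 𝕜] {w c z : 𝕜}
    (hz : ‖z‖ = 1) (h : ‖c‖ ≠ ‖w‖) : w - c * z ≠ 0 := by
  intro hzero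
  rw [sub_eq_zero] at hzero
  rw [hzero, norm_mul, hz, mul_one] at h
  exact h rfl

theorem pell_no_root_of_unity_general (n : ℕ) (hn : 3 ≤ n) (k : ℕ)
    (ω : ℂ) (hω : ω = Complex.exp (2 * Real.pi * Complex.I / n)) :
    1 - (pell (n + 1) : ℂ) - (pell n : ℂ) * ω ^ k ≠ 0 := by
  have hn₀ : n ≠ 0 := by omega
  have hω_norm : ‖ω‖ = 1 := hω ▸ (Complex.isPrimitiveRoot_exp n hn₀).norm'_eq_one hn₀
  apply sub_mul_ne_zero_of_norm_ne (by rw [norm_pow, hω_norm, one_pow])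
  rw [← Rat.cast_one, ← Rat.cast_sub, Complex.norm_ratCast, Complex.norm_ratCast]
  exact_mod_cast abs_pell_ne_abs_one_sub_pell_succ (by omega)

theorem pell_no_root_of_unity (n : ℕ) (hn : 3 ≤ n) (k : ℕ) (hk1 : 1 ≤ k) (hk2 : k ≤ n - 1)
    (ω : ℂ) (hω : ω = Complex.exp (2 * Real.pi * Complex.I / n)) :
    1 - (pell (n + 1) : ℂ) - (pell n : ℂ) * ω ^ k ≠ 0 :=
  pell_no_root_of_unity_general n hn k ω hω
end
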